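/- Let f : ℝ^d → ℝ be μ-strongly convex, L-smooth, twice differentiable, 0 < α < 1/L, and F(w) = f(w - α∇f(w)). Then w is a critical point of F if and only if w - α∇f(w) = x*, where x* is the unique global minimizer of f; moreover such w exists and is unique. -/

import Mathlib

/-!
The map `T w = w - α ∇f w` is a perturbation of the identity by `α ∇f`, a contraction since
`α L < 1`; hence `T` is a bijection and its derivative `1 - α ∇²f w` is invertible. As
`F = f ∘ T`, the chain rule gives `∇F w = 0 ↔ ∇f (T w) = 0`, and strong convexity makes the
minimiser `x*` the only critical point of `f`.
-/

open InnerProductSpace Function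

theorem ContractingWith.bijective_id_sub {E : Type*} [NormedAddCommGroup E] [CompleteSpace E]
    {K : NNReal} {g : E → E} (hg : ContractingWith K g) : Bijective fun x => x - g x := by
  refine bijective_iff_existsUnique _ |>.2 fun c => ?_
  have hc : ContractingWith K fun x => c + g x :=
    ⟨hg.1, LipschitzWith.of_dist_le_mul fun x y => by
      simpa only [dist_add_left] using hg.dist_le_mul x y⟩
  have hfix : ∀ x, x - g x = c ↔ IsFixedPt (fun x => c + g x) x := fun x => by
    rw [sub_eq_iff_eq_add, IsFixedPt, eq_comm, add_comm]
  exact ⟨hc.fixedPoint _, (hfix _).2 hc.fixedPoint_isFixedPt,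
    fun x hx => hc.fixedPoint_unique ((hfix x).1 hx)⟩

section Derivative

variable {𝕜 : Type*} [NontriviallyNormedField 𝕜] {E F G : Type*}
  [NormedAddCommGroup E] [NormedSpace 𝕜 E] [NormedAddCommGroup F] [NormedSpace 𝕜 F]
  [NormedAddCommGroup G] [NormedSpace 𝕜 G]

theorem ContractingWith.surjective_one_sub_fderiv [CompleteSpace E] {K : NNReal} {g : E → E}
    (hg : ContractingWith K g) (x : E) : Surjective ((1 : E →L[𝕜] E) - fderiv 𝕜 g x) := by
  have hnorm : ‖fderiv 𝕜 g x‖ < 1 := (norm_fderiv_le_of_lipschitz 𝕜 hg.2).trans_lt hg.1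
  exact (ContinuousLinearMap.isUnit_iff_bijective.1 (isUnit_one_sub_of_norm_lt_one hnorm)).2

theorem fderiv_comp_eq_zero_iff {f : F → G} {T : E → F} {T' : E →L[𝕜] F} {x : E}
    (hf : DifferentiableAt 𝕜 f (T x)) (hT : HasFDerivAt T T' x) (hT' : Surjective T') :
    fderiv 𝕜 (f ∘ T) x = 0 ↔ fderiv 𝕜 f (T x) = 0 := by
  rw [fderiv_comp x hf hT.differentiableAt, hT.fderiv]
  refine ⟨fun h => ContinuousLinearMap.ext fun y => ?_, fun h => by rw [h]; rfl⟩
  obtain ⟨z, rfl⟩ := hT' y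
  exact DFunLike.congr_fun h z

end Derivative

section Gradient

variable {E : Type*} [NormedAddCommGroup E] [InnerProductSpace ℝ E] [CompleteSpace E]
  {f : E → ℝ}

theorem gradient_eq_zero_iff_fderiv_eq_zero {x : E} : gradient f x = 0 ↔ fderiv ℝ f x = 0 := by
  rw [← toDual_gradient, LinearIsometryEquiv.map_eq_zero_iff]

theorem ContDiff.differentiable_gradient (hf : ContDiff ℝ 2 f) : Differentiable ℝ (gradient f) :=
  (toDual ℝ E).symm.toContinuousLinearEquiv.differentiable.comp
    ((hf.fderiv_right (by norm_num)).differentiable one_ne_zero)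

theorem gradient_eq_zero_iff_eq_of_forall_le (hinj : Injective (gradient f)) {xmin : E}
    (hmin : ∀ y, f xmin ≤ f y) {x : E} : gradient f x = 0 ↔ x = xmin := by
  have hcrit : gradient f xmin = 0 := gradient_eq_zero_iff_fderiv_eq_zero.2 <|
    (isMinOn_univ_iff.2 hmin).isLocalMin Filter.univ_mem |>.fderiv_eq_zero
  exact hinj.eq_iff' hcrit

end Gradient

theorem injective_of_forall_mul_norm_sub_le {E F : Type*} [NormedAddCommGroup E]
    [NormedAddCommGroup F] {g : E → F} {μ : ℝ} (hμ : 0 < μ)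
    (h : ∀ x y, μ * ‖x - y‖ ≤ ‖g x - g y‖) : Injective g := fun x y hxy => by
  have := h x y
  rw [hxy, sub_self, norm_zero] at this
  exact sub_eq_zero.1 <| norm_le_zero_iff.1 <| nonpos_of_mul_nonpos_right this hμ

theorem stmt_15_general {d : ℕ} (f : EuclideanSpace ℝ (Fin d) → ℝ) (μ L α : ℝ)
    (hμ : 0 < μ)
    (hf : ContDiff ℝ 2 f)
    (hsc : ∀ w u : EuclideanSpace ℝ (Fin d),
      μ * ‖w - u‖ ≤ ‖gradient f w - gradient f u‖)
    (hsm : ∀ w u : EuclideanSpace ℝ (Fin d),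
      ‖gradient f w - gradient f u‖ ≤ L * ‖w - u‖)
    (hα : 0 < α) (hα2 : α < 1 / L)
    (F : EuclideanSpace ℝ (Fin d) → ℝ) (hF : F = fun u => f (u - α • gradient f u))
    (xstar : EuclideanSpace ℝ (Fin d)) (hxmin : ∀ y, f xstar ≤ f y) :
    (∀ w : EuclideanSpace ℝ (Fin d),
      gradient F w = 0 ↔ w - α • gradient f w = xstar) ∧
    (∃! w : EuclideanSpace ℝ (Fin d), gradient F w = 0) := by
  have hL : 0 < L := by
    by_contra! hL
    exact (hα.trans hα2).not_ge (one_div_nonpos.2 hL)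
  have hcontr : ContractingWith (α * L).toNNReal fun u => α • gradient f u := by
    refine ⟨Real.toNNReal_lt_one.2 ((lt_div_iff₀ hL).1 hα2), ?_⟩
    refine LipschitzWith.of_dist_le' fun w u => ?_
    rw [dist_eq_norm, dist_eq_norm, ← smul_sub, norm_smul, Real.norm_of_nonneg hα.le, mul_assoc]
    exact mul_le_mul_of_nonneg_left (hsm w u) hα.le
  have hgrad : Differentiable ℝ (gradient f) := hf.differentiable_gradient
  have hcrit : ∀ w, gradient F w = 0 ↔ w - α • gradient f w = xstar := fun w => by
    have hT : HasFDerivAt (fun u => u - α • gradient f u)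
        (1 - fderiv ℝ (fun u => α • gradient f u) w) w :=
      (hasFDerivAt_id w).sub ((hgrad w).const_smul α).hasFDerivAt
    rw [hF, gradient_eq_zero_iff_fderiv_eq_zero,
      ← comp_def f, fderiv_comp_eq_zero_iff (hf.differentiable two_ne_zero _) hT
        (hcontr.surjective_one_sub_fderiv w),
      ← gradient_eq_zero_iff_fderiv_eq_zero,
      gradient_eq_zero_iff_eq_of_forall_le (injective_of_forall_mul_norm_sub_le hμ hsc) hxmin]
  refine ⟨hcrit, ?_⟩
  simp_rw [hcrit]
  exact hcontr.bijective_id_sub.existsUnique xstar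

/-- for `f` `μ`-strongly convex, `L`-smooth, twice differentiable,
`0 < α < 1/L` and `F(w) = f(w - α∇f(w))`, `w` is a critical point of `F` iff
`w - α∇f(w) = x*` where `x*` is the unique global minimizer of `f`; moreover such a `w`
exists and is unique. -/
theorem stmt_15 {d : ℕ} (f : EuclideanSpace ℝ (Fin d) → ℝ) (μ L α : ℝ)
    (hμ : 0 < μ) (hμL : μ ≤ L)
    (hf : ContDiff ℝ 2 f)
    (hsc : ∀ w u : EuclideanSpace ℝ (Fin d),
      μ * ‖w - u‖ ≤ ‖gradient f w - gradient f u‖)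
    (hsm : ∀ w u : EuclideanSpace ℝ (Fin d),
      ‖gradient f w - gradient f u‖ ≤ L * ‖w - u‖)
    (hα : 0 < α) (hα2 : α < 1 / L)
    (F : EuclideanSpace ℝ (Fin d) → ℝ) (hF : F = fun u => f (u - α • gradient f u))
    (xstar : EuclideanSpace ℝ (Fin d)) (hxmin : ∀ y, f xstar ≤ f y) :
    (∀ w : EuclideanSpace ℝ (Fin d),
      gradient F w = 0 ↔ w - α • gradient f w = xstar) ∧
    (∃! w : EuclideanSpace ℝ (Fin d), gradient F w = 0) :=
  stmt_15_general f μ L α hμ hf hsc hsm hα hα2 F hF xstar hxmin
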